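/- arXiv:1608.08859 — 4 statements merged into one kernel-verified Lean document; each statement's English description precedes it below -/
import Mathlib

section
/- There exists a finite strategic game (with finitely many players, each having a finite strategy set including a 'refuse' option with payoff 0) possessing a Nash equilibrium s and an individual improvement path starting from a profile obtained by a single deviation from s that is infinite, i.e., there exists an infinite sequence of profiles each an individual improvement of the previous one. -/
/-- A profile of a finite strategic game with `N` players whose strategies are
    drawn from `Fin M`, with availability sets `A`. -/
abbrev Profile (N M : ℕ) := Fin N → Fin M

/-- `σ` is a Nash equilibrium: every player uses an available strategy and no
    unilateral deviation to an available strategy strictly increases the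
    deviator's payoff. -/
def IsNash {N M : ℕ} (pay : Profile N M → Fin N → ℝ) (A : Fin N → Finset (Fin M))
    (σ : Profile N M) : Prop :=
  (∀ i, σ i ∈ A i) ∧
  ∀ i, ∀ t ∈ A i, pay (Function.update σ i t) i ≤ pay σ i

/-- `σ'` is obtained from `σ` by an individual improvement: one player switches
    to an available strategy, either because their current strategy is no longer
    available or because the switch strictly increases their payoff. -/
def Imp {N M : ℕ} (pay : Profile N M → Fin N → ℝ) (A : Fin N → Finset (Fin M))
    (σ σ' : Profile N M) : Prop :=
  ∃ i, ∃ t ∈ A i, σ' = Function.update σ i t ∧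
    (σ i ∉ A i ∨ (t ≠ σ i ∧ pay σ' i > pay σ i))

/-! Two players each either refuse (strategy `0`) or adopt one of two products `1`, `2`.
Adopting alone costs `1`, so the profile in which both refuse is a Nash equilibrium. Once both
have adopted, player `0` wants to match the other's product and player `1` to differ from it:
this is matching pennies, which has no pure equilibrium, so after player `0` deviates the
players keep improving around the cycle `(1,2) → (2,2) → (2,1) → (1,1) → (1,2)`. -/

theorem imp_of_unilateral_lt {N M : ℕ} {pay : Profile N M → Fin N → ℝ}
    {A : Fin N → Finset (Fin M)} {σ σ' : Profile N M} (i : Fin N) (hA : σ' i ∈ A i)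
    (hrest : ∀ j ≠ i, σ' j = σ j) (hlt : pay σ i < pay σ' i) : Imp pay A σ σ' := by
  have hupd : σ' = Function.update σ i (σ' i) := Function.eq_update_iff.mpr ⟨rfl, hrest⟩
  refine ⟨i, σ' i, hA, hupd, Or.inr ⟨fun hi => hlt.ne ?_, hlt⟩⟩
  rw [hupd, hi, Function.update_eq_self]

def penniesUtility (σ : Profile 2 3) (i : Fin 2) : ℤ :=
  if σ i = 0 then 0
  else if σ (i + 1) = 0 then -1
  else if i = 0 then (if σ 0 = σ 1 then 1 else -1)
  else (if σ 0 = σ 1 then -1 else 1)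

/-- Integer-valued, so that comparisons of payoffs at concrete profiles can be `decide`d. -/
abbrev penniesPay (σ : Profile 2 3) (i : Fin 2) : ℝ := penniesUtility σ i

theorem penniesUtility_update_zero (σ : Profile 2 3) (i : Fin 2) :
    penniesUtility (Function.update σ i 0) i = 0 := by
  simp [penniesUtility]

theorem penniesUtility_nonpos_of_other_zero {σ : Profile 2 3} {i : Fin 2}
    (h : σ (i + 1) = 0) : penniesUtility σ i ≤ 0 := by
  unfold penniesUtility
  split_ifs <;> simp_all

theorem isNash_penniesPay_zero : IsNash penniesPay (fun _ => Finset.univ) 0 := by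
  refine ⟨fun _ => Finset.mem_univ _, fun i t _ => ?_⟩
  have hother : Function.update (0 : Profile 2 3) i t (i + 1) = 0 :=
    Function.update_of_ne (by fin_cases i <;> decide) _ _
  have hzero : penniesUtility 0 i = 0 := by
    simpa using penniesUtility_update_zero 0 i
  have hle : penniesUtility (Function.update 0 i t) i ≤ penniesUtility 0 i :=
    hzero ▸ penniesUtility_nonpos_of_other_zero hother
  exact_mod_cast hle

theorem imp_penniesPay_of_lt {σ σ' : Profile 2 3} (i : Fin 2) (hrest : ∀ j ≠ i, σ' j = σ j)
    (hlt : penniesUtility σ i < penniesUtility σ' i) :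
    Imp penniesPay (fun _ => Finset.univ) σ σ' :=
  imp_of_unilateral_lt i (Finset.mem_univ _) hrest (Int.cast_lt.mpr hlt)

def penniesCycle : Fin 4 → Profile 2 3 := ![![1, 2], ![2, 2], ![2, 1], ![1, 1]]

theorem imp_penniesCycle (i : Fin 4) :
    Imp penniesPay (fun _ => Finset.univ) (penniesCycle i) (penniesCycle (i + 1)) := by
  fin_cases i
  · exact imp_penniesPay_of_lt 0 (by decide) (by decide)
  · exact imp_penniesPay_of_lt 1 (by decide) (by decide)
  · exact imp_penniesPay_of_lt 0 (by decide) (by decide)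
  · exact imp_penniesPay_of_lt 1 (by decide) (by decide)

open Fin.NatCast in
def penniesPath : ℕ → Profile 2 3
  | 0 => ![1, 0]
  | k + 1 => penniesCycle (k : Fin 4)

open Fin.NatCast in
theorem imp_penniesPath (k : ℕ) :
    Imp penniesPay (fun _ => Finset.univ) (penniesPath k) (penniesPath (k + 1)) := by
  cases k with
  | zero =>
    show Imp _ _ ![1, 0] (penniesCycle 0)
    exact imp_penniesPay_of_lt 1 (by decide) (by decide)
  | succ k => simpa [penniesPath] using imp_penniesCycle (k : Fin 4)

/-- There exists a finite strategic game (every player has a `refuse` strategy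
    with payoff 0) with a Nash equilibrium `s` and an infinite individual
    improvement path starting from a single deviation from `s`. -/
theorem fragile_game_exists :
    ∃ (N M : ℕ) (pay : Profile N M → Fin N → ℝ) (A : Fin N → Finset (Fin M))
      (refuse : Fin N → Fin M),
      (∀ i, refuse i ∈ A i) ∧
      (∀ (σ : Profile N M) (i : Fin N), pay (Function.update σ i (refuse i)) i = 0) ∧
      ∃ s : Profile N M, IsNash pay A s ∧
        ∃ (j : Fin N) (t : Fin M), t ∈ A j ∧
          ∃ f : ℕ → Profile N M,
            f 0 = Function.update s j t ∧
            ∀ k, Imp pay A (f k) (f (k + 1)) :=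
  ⟨2, 3, penniesPay, fun _ => Finset.univ, fun _ => 0, fun _ => Finset.mem_univ _,
    fun σ i => by simp [penniesUtility_update_zero], 0, isNash_penniesPay_zero, 0, 1,
    Finset.mem_univ _, penniesPath, by decide, imp_penniesPath⟩
end

section
/- There exists a finite strategic game G, a Nash equilibrium s of G, and an 'expansion' G' (identical to G except one player's strategy set gains one new strategy) such that: s is not a Nash equilibrium of G', every individual improvement path in G' starting from s is finite and terminates in a profile s' that is a Nash equilibrium of both G and G', and every player's payoff at s' is strictly less than at s. -/
/-!
Two players, strategies `0, 1, 2`, both initially restricted to `{0, 2}`; `(0, 0)` pays `(3, 3)`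
and is an equilibrium. Giving player `0` the strategy `1` starts a forced improvement path
`(0, 0) → (1, 0) → (1, 2) → (2, 2)`: player `0` grabs the new strategy (payoff `4`), player `1`
answers (payoff `2`), which makes the new strategy bad for player `0`, who retreats to `2`.
The path ends in `(2, 2)`, an equilibrium of both games paying `(2, 2)`. Since every profile on the
path has exactly one improving move and the last has none, every improvement path from `(0, 0)`
follows it.
-/

-- Natural-number payoffs make both conditions decidable, so a concrete game is checked by `decide`.
section NatPayoffs

variable {N M : ℕ} (pay : Profile N M → Fin N → ℕ) (A : Fin N → Finset (Fin M))

theorem isNash_natCast_iff (σ : Profile N M) :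
    IsNash (fun σ i => (pay σ i : ℝ)) A σ ↔
      (∀ i, σ i ∈ A i) ∧ ∀ i, ∀ t ∈ A i, pay (Function.update σ i t) i ≤ pay σ i := by
  simp only [IsNash, Nat.cast_le]

theorem imp_natCast_iff (σ σ' : Profile N M) :
    Imp (fun σ i => (pay σ i : ℝ)) A σ σ' ↔
      ∃ i, ∃ t ∈ A i, σ' = Function.update σ i t ∧
        (σ i ∉ A i ∨ (t ≠ σ i ∧ pay σ' i > pay σ i)) := by
  simp only [Imp, gt_iff_lt, Nat.cast_lt]

end NatPayoffs

theorem Fin.reflTransGen_of_forall_rel {α : Type*} {R : α → α → Prop} {m : ℕ}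
    (f : Fin (m + 1) → α) (hf : ∀ k : Fin m, R (f k.castSucc) (f k.succ)) :
    Relation.ReflTransGen R (f 0) (f (Fin.last m)) :=
  Fin.induction (motive := fun k => Relation.ReflTransGen R (f 0) (f k)) .refl
    (fun k ih => ih.tail (hf k)) (Fin.last m)

namespace VulnerableExample

def s : Profile 2 3 := ![0, 0]
def a : Profile 2 3 := ![1, 0]
def b : Profile 2 3 := ![1, 2]
def c : Profile 2 3 := ![2, 2]

def payoff (σ : Profile 2 3) (i : Fin 2) : ℕ :=
  if σ = s then 3
  else if σ = a then (if i = 0 then 4 else 1)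
  else if σ = b then (if i = 0 then 1 else 2)
  else if σ = c then 2
  else 0

noncomputable def pay : Profile 2 3 → Fin 2 → ℝ := fun σ i => payoff σ i

def A : Fin 2 → Finset (Fin 3) := fun _ => {0, 2}

def A' : Fin 2 → Finset (Fin 3) := Function.update A 0 (insert 1 (A 0))

theorem pay_eq : pay = fun σ i => (payoff σ i : ℝ) := rfl

theorem imp_s_iff : ∀ σ, Imp pay A' s σ ↔ σ = a := by
  simp only [pay_eq, imp_natCast_iff]; decide

theorem imp_a_iff : ∀ σ, Imp pay A' a σ ↔ σ = b := by
  simp only [pay_eq, imp_natCast_iff]; decide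

theorem imp_b_iff : ∀ σ, Imp pay A' b σ ↔ σ = c := by
  simp only [pay_eq, imp_natCast_iff]; decide

theorem not_imp_c : ∀ σ, ¬ Imp pay A' c σ := by
  simp only [pay_eq, imp_natCast_iff]; decide

theorem isNash_A_s : IsNash pay A s := (isNash_natCast_iff payoff A s).2 (by decide)

theorem not_isNash_A'_s : ¬ IsNash pay A' s := fun h =>
  absurd ((isNash_natCast_iff payoff A' s).1 h) (by decide)

theorem isNash_A_c : IsNash pay A c := (isNash_natCast_iff payoff A c).2 (by decide)

theorem isNash_A'_c : IsNash pay A' c := (isNash_natCast_iff payoff A' c).2 (by decide)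

theorem pay_c_lt_pay_s : ∀ i, pay c i < pay s i := by
  simp only [pay_eq, Nat.cast_lt]; decide

theorem acc_s : Acc (flip (Imp pay A')) s :=
  have acc_c : Acc (flip (Imp pay A')) c := ⟨c, fun σ h => absurd h (not_imp_c σ)⟩
  have acc_b : Acc (flip (Imp pay A')) b := ⟨b, fun σ h => (imp_b_iff σ).1 h ▸ acc_c⟩
  have acc_a : Acc (flip (Imp pay A')) a := ⟨a, fun σ h => (imp_a_iff σ).1 h ▸ acc_b⟩
  ⟨s, fun σ h => (imp_s_iff σ).1 h ▸ acc_a⟩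

theorem eq_s_or_a_or_b_or_c_of_reflTransGen {σ : Profile 2 3}
    (hσ : Relation.ReflTransGen (Imp pay A') s σ) :
    σ = s ∨ σ = a ∨ σ = b ∨ σ = c := by
  induction hσ with
  | refl => exact .inl rfl
  | tail _ hstep ih =>
    rcases ih with rfl | rfl | rfl | rfl
    · exact .inr (.inl ((imp_s_iff _).1 hstep))
    · exact .inr (.inr (.inl ((imp_a_iff _).1 hstep)))
    · exact .inr (.inr (.inr ((imp_b_iff _).1 hstep)))
    · exact absurd hstep (not_imp_c _)

theorem eq_c_of_reflTransGen_of_terminal {σ : Profile 2 3}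
    (hσ : Relation.ReflTransGen (Imp pay A') s σ) (hterm : ∀ σ', ¬ Imp pay A' σ σ') :
    σ = c := by
  rcases eq_s_or_a_or_b_or_c_of_reflTransGen hσ with rfl | rfl | rfl | rfl
  · exact absurd ((imp_s_iff a).2 rfl) (hterm a)
  · exact absurd ((imp_a_iff b).2 rfl) (hterm b)
  · exact absurd ((imp_b_iff c).2 rfl) (hterm c)
  · rfl

end VulnerableExample

/-- There exists a finite strategic game `G`, a Nash equilibrium `s` of `G`, and
    an expansion `G'` (one player `j` gains one new strategy `x`) such that `s`
    is no longer a Nash equilibrium of `G'`, there is no infinite individual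
    improvement path in `G'` from `s`, and every maximal improvement path in
    `G'` from `s` terminates in a profile that is a Nash equilibrium of both
    games with strictly smaller payoff for every player: a vulnerable game. -/
theorem vulnerable_game_exists :
    ∃ (N M : ℕ) (pay : Profile N M → Fin N → ℝ) (A : Fin N → Finset (Fin M))
      (j : Fin N) (x : Fin M), x ∉ A j ∧
      ∃ s : Profile N M,
        IsNash pay A s ∧
        (let A' := Function.update A j (insert x (A j))
        ¬ IsNash pay A' s ∧
        (¬ ∃ f : ℕ → Profile N M, f 0 = s ∧ ∀ k, Imp pay A' (f k) (f (k + 1))) ∧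
        ∀ (m : ℕ) (f : Fin (m + 1) → Profile N M),
          f 0 = s →
          (∀ k : Fin m, Imp pay A' (f k.castSucc) (f k.succ)) →
          (∀ σ', ¬ Imp pay A' (f (Fin.last m)) σ') →
          IsNash pay A (f (Fin.last m)) ∧ IsNash pay A' (f (Fin.last m)) ∧
            ∀ i, pay (f (Fin.last m)) i < pay s i) := by
  open VulnerableExample in
  refine ⟨2, 3, pay, A, 0, 1, by decide, s, isNash_A_s, not_isNash_A'_s,
    fun hpath => not_acc_iff_exists_descending_chain.2 hpath acc_s, ?_⟩
  intro m f hf0 hpath hterm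
  have hc : f (Fin.last m) = c :=
    eq_c_of_reflTransGen_of_terminal (hf0 ▸ Fin.reflTransGen_of_forall_rel f hpath) hterm
  rw [hc]
  exact ⟨isNash_A_c, isNash_A'_c, pay_c_lt_pay_s⟩
end

section
/- There exists a finite strategic game G, a Nash equilibrium s of G, and a 'contraction' G' (identical to G except one player loses one strategy, not the one played at s or losing forces a move) such that every individual improvement path in G' starting from the induced profile terminates in a profile s' that is a Nash equilibrium of both G and G' with every player's payoff strictly greater at s' than at s. -/
/-!
In a two-player stag hunt, the safe profile `(0, 0)` and the risky profile `(1, 1)` are both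
equilibria, and the risky one pays every player more. Forbidding player `0` the safe strategy
forces her to switch to `1`; then player `1`'s only improvement is to follow her, after which
nobody can move. So the contracted game has exactly one improvement path from `(0, 0)`, the
forced chain `(0, 0) → (1, 0) → (1, 1)`, and it ends in the better equilibrium.
-/

section ForcedChain

variable {α : Type*} (R : α → α → Prop)

def IsForcedChain (c : ℕ → α) (n : ℕ) : Prop :=
  (∀ k < n, ∀ b, R (c k) b ↔ b = c (k + 1)) ∧ ∀ b, ¬ R (c n) b

variable {R} {c : ℕ → α} {n : ℕ}

namespace IsForcedChain

theorem eq_of_path (hc : IsForcedChain R c n) {f : ℕ → α} (h0 : f 0 = c 0) {m : ℕ}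
    (hf : ∀ k < m, R (f k) (f (k + 1))) : ∀ k ≤ min m n, f k = c k
  | 0, _ => h0
  | k + 1, hk => by
    have hfk : f k = c k := hc.eq_of_path h0 hf k (by omega)
    exact (hc.1 k (by omega) _).1 (hfk ▸ hf k (by omega))

theorem not_exists_path (hc : IsForcedChain R c n) :
    ¬ ∃ f : ℕ → α, f 0 = c 0 ∧ ∀ k, R (f k) (f (k + 1)) := by
  rintro ⟨f, h0, hf⟩
  have hfn : f n = c n := hc.eq_of_path (m := n) h0 (fun k _ => hf k) n (by omega)
  exact hc.2 _ (hfn ▸ hf n)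

theorem last_eq_of_maximal (hc : IsForcedChain R c n) {m : ℕ} (f : Fin (m + 1) → α)
    (h0 : f 0 = c 0) (hf : ∀ k : Fin m, R (f k.castSucc) (f k.succ))
    (hmax : ∀ b, ¬ R (f (Fin.last m)) b) : f (Fin.last m) = c n := by
  set g : ℕ → α := fun k => f (Fin.ofNat (m + 1) k)
  have hg_path : ∀ k < m, R (g k) (g (k + 1)) := by
    intro k hk
    simpa [g, Fin.ofNat, Nat.mod_eq_of_lt (by omega : k < m + 1),
      Nat.mod_eq_of_lt (Nat.succ_lt_succ hk)] using hf ⟨k, hk⟩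
  have hgc := hc.eq_of_path (f := g) h0 hg_path
  have hglast : g m = f (Fin.last m) := by simp [g]
  rcases lt_trichotomy m n with hmn | rfl | hnm
  · have hfm : f (Fin.last m) = c m := hglast ▸ hgc m (by omega)
    exact (hmax _ (hfm ▸ (hc.1 m hmn _).2 rfl)).elim
  · exact hglast ▸ hgc m (by omega)
  · exact (hc.2 _ (hgc n (by omega) ▸ hg_path n hnm)).elim

end IsForcedChain

end ForcedChain

section Nash

variable {N M : ℕ} {pay : Profile N M → Fin N → ℝ} {A B : Fin N → Finset (Fin M)}
  {σ : Profile N M}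

theorem IsNash.not_imp (h : IsNash pay A σ) (σ' : Profile N M) : ¬ Imp pay A σ σ' := by
  rintro ⟨i, t, ht, rfl, hσ | ⟨-, hlt⟩⟩
  · exact hσ (h.1 i)
  · exact (h.2 i t ht).not_gt hlt

theorem IsNash.of_subset (h : IsNash pay A σ) (hBA : ∀ i, B i ⊆ A i) (hσ : ∀ i, σ i ∈ B i) :
    IsNash pay B σ :=
  ⟨hσ, fun i t ht => h.2 i t (hBA i ht)⟩

end Nash

section Pair

variable {α : Type*} (a b t : α)

@[simp]
theorem update_vecPair_zero : Function.update ![a, b] 0 t = ![t, b] := by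
  ext i; fin_cases i <;> rfl

@[simp]
theorem update_vecPair_one : Function.update ![a, b] 1 t = ![a, t] := by
  ext i; fin_cases i <;> rfl

end Pair

namespace StagHunt

def pay (σ : Profile 2 2) (i : Fin 2) : ℝ :=
  if σ i = 0 then 0 else if σ 0 = σ 1 then 1 else -1

abbrev avail : Fin 2 → Finset (Fin 2) := fun _ => Finset.univ

abbrev avail' : Fin 2 → Finset (Fin 2) := Function.update avail 0 ((avail 0).erase 0)

def cascade : ℕ → Profile 2 2
  | 0 => ![0, 0]
  | 1 => ![1, 0]
  | _ => ![1, 1]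

theorem isNash_coordinated (a : Fin 2) : IsNash pay avail ![a, a] := by
  refine ⟨fun _ => Finset.mem_univ _, fun i t _ => ?_⟩
  fin_cases i <;> fin_cases t <;> fin_cases a <;> norm_num [pay, Function.update_apply]

theorem imp_safe_iff (σ' : Profile 2 2) : Imp pay avail' ![0, 0] σ' ↔ σ' = ![1, 0] := by
  constructor
  · rintro ⟨i, t, ht, rfl, h⟩
    fin_cases i <;> fin_cases t <;> simp_all [pay, not_lt_of_ge]
  · rintro rfl
    exact ⟨0, 1, by simp, (update_vecPair_zero _ _ _).symm, Or.inl (by simp)⟩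

theorem imp_miscoordinated_iff (σ' : Profile 2 2) : Imp pay avail' ![1, 0] σ' ↔ σ' = ![1, 1] := by
  constructor
  · rintro ⟨i, t, ht, rfl, h⟩
    fin_cases i <;> fin_cases t <;> simp_all [pay]
  · rintro rfl
    exact ⟨1, 1, by simp, (update_vecPair_one _ _ _).symm, Or.inr ⟨by simp, by norm_num [pay]⟩⟩

theorem isNash_risky_contracted : IsNash pay avail' ![1, 1] :=
  (isNash_coordinated 1).of_subset (fun i => by simp [Function.update_apply])
    (fun i => by fin_cases i <;> simp)

theorem isForcedChain_cascade : IsForcedChain (Imp pay avail') cascade 2 := by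
  refine ⟨fun k hk => ?_, isNash_risky_contracted.not_imp⟩
  interval_cases k
  · exact imp_safe_iff
  · exact imp_miscoordinated_iff

end StagHunt

/-- There exists a finite strategic game `G`, a Nash equilibrium `s` of `G`, and
    a contraction `G'` (strategy `x` removed from player `j`) such that there is
    no infinite individual improvement path in `G'` from `s`, and every maximal
    improvement path in `G'` from `s` terminates in a profile that is a Nash
    equilibrium of both games with strictly greater payoff for every player:
    an ineffective game. -/
theorem ineffective_game_exists :
    ∃ (N M : ℕ) (pay : Profile N M → Fin N → ℝ) (A : Fin N → Finset (Fin M))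
      (j : Fin N) (x : Fin M), x ∈ A j ∧
      ∃ s : Profile N M,
        IsNash pay A s ∧
        (let A' := Function.update A j ((A j).erase x)
        (¬ ∃ f : ℕ → Profile N M, f 0 = s ∧ ∀ k, Imp pay A' (f k) (f (k + 1))) ∧
        ∀ (m : ℕ) (f : Fin (m + 1) → Profile N M),
          f 0 = s →
          (∀ k : Fin m, Imp pay A' (f k.castSucc) (f k.succ)) →
          (∀ σ', ¬ Imp pay A' (f (Fin.last m)) σ') →
          IsNash pay A (f (Fin.last m)) ∧ IsNash pay A' (f (Fin.last m)) ∧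
            ∀ i, pay (f (Fin.last m)) i > pay s i) := by
  open StagHunt in
  refine ⟨2, 2, pay, avail, 0, 0, Finset.mem_univ _, ![0, 0], isNash_coordinated 0,
    isForcedChain_cascade.not_exists_path, fun m f h0 hf hmax => ?_⟩
  have hlast : f (Fin.last m) = ![1, 1] := isForcedChain_cascade.last_eq_of_maximal f h0 hf hmax
  rw [hlast]
  exact ⟨isNash_coordinated 1, isNash_risky_contracted, fun i => by fin_cases i <;> norm_num [pay]⟩
end

section
/- There exists a finite strategic game G with a Nash equilibrium s and a contraction G' (one strategy removed from one player) such that every individual improvement path in G' starting from the profile induced by s is infinite. -/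
/-!
Player `0` may either play matching pennies against player `1` (strategies `0`, `1`; payoffs `0`
or `1`) or take an exit `2` that pays both players `2`. Since `2` is the largest payoff anywhere,
the exit profile is a Nash equilibrium. Forbidding the exit leaves plain matching pennies, where
every profile admits a move: a player on an unavailable strategy must leave it, and otherwise the
loser of the current round profits by switching. Hence no improvement path ever ends.
-/

section Improvement

variable {N M : ℕ} {pay : Profile N M → Fin N → ℝ} {A : Fin N → Finset (Fin M)}

theorem isNash_of_forall_pay_le {σ : Profile N M} (hσ : ∀ i, σ i ∈ A i)
    (hmax : ∀ τ i, pay τ i ≤ pay σ i) : IsNash pay A σ :=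
  ⟨hσ, fun i _ _ => hmax _ i⟩

theorem imp_update_of_notMem {σ : Profile N M} {i : Fin N} {t : Fin M} (ht : t ∈ A i)
    (hσ : σ i ∉ A i) : Imp pay A σ (Function.update σ i t) :=
  ⟨i, t, ht, rfl, Or.inl hσ⟩

theorem imp_update_of_pay_lt {σ : Profile N M} {i : Fin N} {t : Fin M} (ht : t ∈ A i)
    (hlt : pay σ i < pay (Function.update σ i t) i) : Imp pay A σ (Function.update σ i t) := by
  refine ⟨i, t, ht, rfl, Or.inr ⟨?_, hlt⟩⟩
  rintro rfl
  simp at hlt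

end Improvement

def exitPennies : Profile 2 3 → Fin 2 → ℝ := fun σ i =>
  if σ 0 = 2 then 2
  else if i = 0 then (if σ 0 = σ 1 then 1 else 0)
  else (if σ 0 = σ 1 then 0 else 1)

def exitStrategies : Fin 2 → Finset (Fin 3) := ![{0, 1, 2}, {0, 1}]

theorem exitPennies_le_two (σ : Profile 2 3) (i : Fin 2) : exitPennies σ i ≤ 2 := by
  unfold exitPennies
  split_ifs <;> norm_num

theorem isNash_exit : IsNash exitPennies exitStrategies ![2, 0] := by
  refine isNash_of_forall_pay_le (fun i => by fin_cases i <;> decide) fun τ i => ?_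
  simpa [exitPennies] using exitPennies_le_two τ i

theorem update_exitStrategies_erase_exit :
    Function.update exitStrategies 0 ((exitStrategies 0).erase 2) = fun _ => {0, 1} := by
  funext i
  fin_cases i <;> decide

theorem matchingPennies_exists_imp (τ : Profile 2 3) :
    ∃ τ', Imp exitPennies (fun _ => {0, 1}) τ τ' := by
  have hzero : (0 : Fin 3) ∈ ({0, 1} : Finset (Fin 3)) := by decide
  by_cases h0 : τ 0 ∈ ({0, 1} : Finset (Fin 3))
  swap
  · exact ⟨_, imp_update_of_notMem (i := 0) hzero h0⟩
  by_cases h1 : τ 1 ∈ ({0, 1} : Finset (Fin 3))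
  swap
  · exact ⟨_, imp_update_of_notMem (i := 1) hzero h1⟩
  have h0exit : τ 0 ≠ 2 := by rintro h; simp [h] at h0
  have h1exit : τ 1 ≠ 2 := by rintro h; simp [h] at h1
  by_cases hmatch : τ 0 = τ 1
  · -- the mismatcher switches to the other coin face
    refine ⟨_, imp_update_of_pay_lt (i := 1) (t := if τ 1 = 0 then 1 else 0)
      (by split_ifs <;> decide) ?_⟩
    have hflip : τ 1 ≠ if τ 1 = 0 then 1 else 0 := by split_ifs with h <;> simp [h]
    simp [exitPennies, Function.update, hmatch, h1exit, hflip]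
  · -- the matcher copies the other player
    refine ⟨_, imp_update_of_pay_lt (i := 0) (t := τ 1) h1 ?_⟩
    simp [exitPennies, Function.update, h0exit, hmatch, h1exit]

/-- There exists a finite strategic game `G` with a Nash equilibrium `s` and a
    contraction `G'` (strategy `x` removed from player `j`) such that every
    individual improvement path in `G'` starting from `s` is infinite, i.e.
    every finite improvement path from `s` can be extended: an unsafe game. -/
theorem unsafe_game_exists :
    ∃ (N M : ℕ) (pay : Profile N M → Fin N → ℝ) (A : Fin N → Finset (Fin M))
      (j : Fin N) (x : Fin M), x ∈ A j ∧
      ∃ s : Profile N M,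
        IsNash pay A s ∧
        (let A' := Function.update A j ((A j).erase x)
        ∀ (m : ℕ) (f : Fin (m + 1) → Profile N M),
          f 0 = s →
          (∀ k : Fin m, Imp pay A' (f k.castSucc) (f k.succ)) →
          ∃ σ', Imp pay A' (f (Fin.last m)) σ') := by
  refine ⟨2, 3, exitPennies, exitStrategies, 0, 2, by decide, ![2, 0], isNash_exit, ?_⟩
  intro A' m f _ _
  rw [show A' = fun _ => {0, 1} from update_exitStrategies_erase_exit]
  exact matchingPennies_exists_imp _
end
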